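/- arXiv:2506.21254 — 2 statements merged into one kernel-verified Lean document; each statement's English description precedes it below -/
import Mathlib

section
/- Let G be a nice graph with maximum degree Δ, and let x be the minimum over all proper labellings ℓ of G of max_u σ_ℓ(u). Then x ≤ MV^W(G) + Δ and MV^W(G) + Δ ≤ 3Δ(1 + x). -/
/-!
An irregularising walk `W` yields the proper labelling `e ↦ 1 + (traversals of e by W)`, whose
vertex sums are the degrees `d(u) + inc_W(u) ≤ Δ + max inc_W` of `G + W`.

Conversely, let `ℓ` be a proper labelling with maximal vertex sum `x`. A closed walk traversing
every edge `e` exactly `2Δ ℓ(e)` times exists: starting from the trivial walk, connectivity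
always provides an untraversed edge at a vertex of the walk, and a back-and-forth detour along
it is spliced in there. Then `inc_W(u) = 2Δ σ_ℓ(u) ≤ 2Δ x`, and as degrees stay below `2Δ`,
the degree `d(u) + 2Δ σ_ℓ(u)` in `G + W` determines `σ_ℓ(u)`, so `W` is irregularising.
-/

open SimpleGraph Finset

variable {V : Type*}

/-- `W.inc u` is the number of edge-traversals of the walk `W` incident to `u`. -/
def SimpleGraph.Walk.inc [DecidableEq V] {G : SimpleGraph V} {a b : V}
    (W : G.Walk a b) (u : V) : ℕ :=
  (W.edges.filter (fun e => u ∈ e)).length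

/-- A walk `W` of `G` is irregularising if in the multigraph `G + W` no two
adjacent vertices have the same degree. -/
def SimpleGraph.Walk.Irregularising [Fintype V] [DecidableEq V] {G : SimpleGraph V}
    [DecidableRel G.Adj] {a b : V} (W : G.Walk a b) : Prop :=
  ∀ ⦃u v : V⦄, G.Adj u v → G.degree u + W.inc u ≠ G.degree v + W.inc v

/-- The vertex sum `σ_ℓ(u)` of a labelling. -/
def vertexSum [Fintype V] [DecidableEq V] (G : SimpleGraph V) [DecidableRel G.Adj]
    (ℓ : Sym2 V → ℕ) (u : V) : ℕ :=
  ∑ w ∈ G.neighborFinset u, ℓ s(u, w)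

/-- A labelling is proper if adjacent vertices get distinct sums. -/
def IsProperLabelling [Fintype V] [DecidableEq V] (G : SimpleGraph V) [DecidableRel G.Adj]
    (ℓ : Sym2 V → ℕ) : Prop :=
  ∀ ⦃u v : V⦄, G.Adj u v → vertexSum G ℓ u ≠ vertexSum G ℓ v

/-- Minimum length of an irregularising walk, as an extended natural number. -/
noncomputable def MLW [Fintype V] [DecidableEq V] (G : SimpleGraph V) [DecidableRel G.Adj] : ℕ∞ :=
  ⨅ (a : V) (b : V) (W : G.Walk a b) (_ : W.Irregularising), (W.length : ℕ∞)

/-- Infimum over irregularising walks of the maximum number of traversals of a single edge. -/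
noncomputable def MEW [Fintype V] [DecidableEq V] (G : SimpleGraph V) [DecidableRel G.Adj] : ℕ∞ :=
  ⨅ (a : V) (b : V) (W : G.Walk a b) (_ : W.Irregularising),
    ((W.edges.toFinset.sup fun e => W.edges.count e : ℕ) : ℕ∞)

/-- Infimum over irregularising walks of `max_u inc_W(u)`. -/
noncomputable def MVW [Fintype V] [DecidableEq V] (G : SimpleGraph V) [DecidableRel G.Adj] : ℕ∞ :=
  ⨅ (a : V) (b : V) (W : G.Walk a b) (_ : W.Irregularising),
    ((Finset.univ.sup fun u => W.inc u : ℕ) : ℕ∞)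

namespace SimpleGraph

variable {G : SimpleGraph V}

namespace Walk

def shuttle {u v : V} (h : G.Adj u v) : ℕ → G.Walk u u
  | 0 => nil
  | n + 1 => cons h (cons h.symm (shuttle h n))

lemma edges_shuttle {u v : V} (h : G.Adj u v) (n : ℕ) :
    (shuttle h n).edges = List.replicate (2 * n) s(u, v) := by
  induction n with
  | zero => rfl
  | succ n ih =>
    rw [shuttle, edges_cons, edges_cons, ih, Sym2.eq_swap, Nat.mul_succ]
    rfl

lemma exists_edges_perm_append_replicate [DecidableEq V] {a b u v : V} (W : G.Walk a b)
    (hu : u ∈ W.support) (h : G.Adj u v) (n : ℕ) :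
    ∃ W' : G.Walk a b, W'.edges.Perm (W.edges ++ List.replicate (2 * n) s(u, v)) := by
  refine ⟨(W.takeUntil u hu).append ((shuttle h n).append (W.dropUntil u hu)), ?_⟩
  conv_rhs => rw [← W.take_spec hu]
  simp only [edges_append, edges_shuttle, List.append_assoc]
  exact List.perm_append_left_iff _ |>.mpr List.perm_append_comm

lemma exists_adj_mem_support_notMem_edges {a b u w : V} {W : G.Walk a b} (p : G.Walk u w)
    (hu : u ∈ W.support) (hp : ¬ p.edges ⊆ W.edges) :
    ∃ x y, G.Adj x y ∧ x ∈ W.support ∧ s(x, y) ∉ W.edges := by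
  induction p with
  | nil => simp at hp
  | @cons u v w h p ih =>
    by_cases huv : s(u, v) ∈ W.edges
    · exact ih (W.snd_mem_support_of_mem_edges huv) fun hsub =>
        hp (List.cons_subset.mpr ⟨huv, hsub⟩)
    · exact ⟨u, v, h, hu, huv⟩

end Walk

theorem Connected.exists_walk_count_edges_eq_two_mul [DecidableEq V] [Fintype G.edgeSet]
    (hG : G.Connected) (a : V) (k : Sym2 V → ℕ) (hk : ∀ e ∈ G.edgeSet, k e ≠ 0) :
    ∃ W : G.Walk a a, ∀ e ∈ G.edgeSet, W.edges.count e = 2 * k e := by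
  suffices ∀ n, ∀ W : G.Walk a a, #{e ∈ G.edgeFinset | e ∉ W.edges} = n →
      (∀ e ∈ W.edges, W.edges.count e = 2 * k e) →
      ∃ W : G.Walk a a, ∀ e ∈ G.edgeSet, W.edges.count e = 2 * k e from
    this _ Walk.nil rfl (by simp)
  intro n
  induction n with
  | zero =>
    intro W hmissing hcount
    refine ⟨W, fun e he => hcount e ?_⟩
    by_contra hne
    exact Finset.card_ne_zero.mpr ⟨e, by simpa [hne] using he⟩ hmissing
  | succ n ih =>
    intro W hmissing hcount
    obtain ⟨e, he⟩ := Finset.card_pos.mp (by omega : 0 < #{e ∈ G.edgeFinset | e ∉ W.edges})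
    rw [Finset.mem_filter, mem_edgeFinset] at he
    induction e using Sym2.ind with | _ p q => ?_
    have hpq : G.Adj p q := he.1
    obtain ⟨x, y, hxy, hx, hxyW⟩ := Walk.exists_adj_mem_support_notMem_edges
      ((hG.preconnected a p).some.concat hpq) W.start_mem_support
      fun hsub => he.2 (hsub (by simp [Walk.edges_concat]))
    obtain ⟨W', hW'⟩ := W.exists_edges_perm_append_replicate hx hxy (k s(x, y))
    have hkxy := hk s(x, y) hxy
    have hmem : ∀ e, e ∈ W'.edges ↔ e ∈ W.edges ∨ e = s(x, y) := by
      intro e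
      simp [hW'.mem_iff, hkxy]
    refine ih W' ?_ fun e he => ?_
    · have hmissing' : {e ∈ G.edgeFinset | e ∉ W'.edges} =
          {e ∈ G.edgeFinset | e ∉ W.edges}.erase s(x, y) := by
        ext e
        simp only [Finset.mem_filter, Finset.mem_erase, hmem]
        tauto
      rw [hmissing', Finset.card_erase_of_mem (by simpa using ⟨hxy, hxyW⟩), hmissing,
        Nat.add_sub_cancel]
    · rw [hW'.count_eq, List.count_append, List.count_replicate]
      rcases (hmem e).mp he with he | rfl
      · simp only [hcount e he, beq_iff_eq, (ne_of_mem_of_not_mem he hxyW).symm, if_false,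
          add_zero]
      · simp [List.count_eq_zero.mpr hxyW]

lemma Walk.inc_eq_sum_count [Fintype V] [DecidableEq V] [DecidableRel G.Adj] {a b : V}
    (W : G.Walk a b) (u : V) :
    W.inc u = ∑ v ∈ G.neighborFinset u, W.edges.count s(u, v) := by
  rw [Walk.inc, ← List.countP_eq_length_filter, ← Finset.sum_filter_count_eq_countP,
    ← Finset.sum_image (f := (W.edges.count ·)) (g := (s(u, ·))) (by simp)]
  refine Finset.sum_subset (fun e he => ?_) (fun e he hne => ?_)
  · obtain ⟨heW, hue⟩ := Finset.mem_filter.mp he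
    obtain ⟨v, rfl⟩ := Sym2.mem_iff_exists.mp hue
    exact Finset.mem_image_of_mem _ <| by
      simpa using W.edges_subset_edgeSet (List.mem_toFinset.mp heW)
  · obtain ⟨v, -, rfl⟩ := Finset.mem_image.mp he
    exact List.count_eq_zero.mpr fun h =>
      hne (Finset.mem_filter.mpr ⟨List.mem_toFinset.mpr h, Sym2.mem_mk_left u v⟩)

end SimpleGraph

section Labelling

variable [Fintype V] [DecidableEq V] {G : SimpleGraph V} [DecidableRel G.Adj] {a b : V}

lemma vertexSum_one_add_count (W : G.Walk a b) (u : V) :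
    vertexSum G (fun e => 1 + W.edges.count e) u = G.degree u + W.inc u := by
  rw [vertexSum, W.inc_eq_sum_count, Finset.sum_add_distrib, Finset.sum_const, smul_eq_mul,
    mul_one, card_neighborFinset_eq_degree]

lemma SimpleGraph.Walk.Irregularising.isProperLabelling {W : G.Walk a b}
    (hW : W.Irregularising) : IsProperLabelling G (fun e => 1 + W.edges.count e) := by
  intro u v huv
  rw [vertexSum_one_add_count, vertexSum_one_add_count]
  exact hW huv

lemma sup_vertexSum_one_add_count_le (W : G.Walk a b) :
    (univ.sup fun u => vertexSum G (fun e => 1 + W.edges.count e) u) ≤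
      (univ.sup fun u => W.inc u) + G.maxDegree :=
  Finset.sup_le fun u _ => by
    rw [vertexSum_one_add_count, add_comm]
    exact add_le_add (Finset.le_sup (mem_univ u)) (G.degree_le_maxDegree u)

lemma SimpleGraph.Walk.inc_eq_mul_vertexSum {W : G.Walk a b} {ℓ : Sym2 V → ℕ} {m : ℕ}
    (hW : ∀ e ∈ G.edgeSet, W.edges.count e = m * ℓ e) (u : V) :
    W.inc u = m * vertexSum G ℓ u := by
  rw [W.inc_eq_sum_count, vertexSum, Finset.mul_sum]
  exact Finset.sum_congr rfl fun v hv => hW _ ((mem_neighborFinset G u v).mp hv)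

lemma IsProperLabelling.irregularising {ℓ : Sym2 V → ℕ} (hℓ : IsProperLabelling G ℓ)
    {m : ℕ} (hm : ∀ ⦃u v⦄, G.Adj u v → G.degree u < m) {W : G.Walk a b}
    (hW : ∀ e ∈ G.edgeSet, W.edges.count e = m * ℓ e) : W.Irregularising := by
  intro u v huv h
  rw [W.inc_eq_mul_vertexSum hW, W.inc_eq_mul_vertexSum hW] at h
  have hm0 : 0 < m := (hm huv).pos
  apply hℓ huv
  simpa [Nat.add_mul_div_left _ _ hm0, Nat.div_eq_of_lt (hm huv), Nat.div_eq_of_lt (hm huv.symm)]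
    using congrArg (· / m) h

lemma MVW_le (W : G.Walk a b) (hW : W.Irregularising) :
    MVW G ≤ (univ.sup fun u => W.inc u : ℕ) :=
  iInf₂_le_of_le a b <| iInf₂_le_of_le W hW le_rfl

lemma le_MVW {n : ℕ∞}
    (h : ∀ (a b : V) (W : G.Walk a b), W.Irregularising →
      n ≤ (univ.sup fun u => W.inc u : ℕ)) :
    n ≤ MVW G :=
  le_iInf₂ fun a b => le_iInf₂ fun W hW => h a b W hW

end Labelling

theorem stmt_8_general {V : Type*} [Fintype V] [DecidableEq V] (G : SimpleGraph V)
    [DecidableRel G.Adj] (hconn : G.Connected)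
    (x : ℕ)
    (hx : IsLeast {s : ℕ | ∃ ℓ : Sym2 V → ℕ, (∀ e ∈ G.edgeSet, 1 ≤ ℓ e) ∧
      IsProperLabelling G ℓ ∧ (Finset.univ.sup fun u => vertexSum G ℓ u) = s} x) :
    (x : ℕ∞) ≤ MVW G + (G.maxDegree : ℕ∞) ∧
      MVW G + (G.maxDegree : ℕ∞) ≤ 3 * (G.maxDegree : ℕ∞) * (1 + (x : ℕ∞)) := by
  obtain ⟨⟨ℓ, hℓpos, hℓ, hℓx⟩, hleast⟩ := hx
  constructor
  · rw [← tsub_le_iff_right]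
    refine le_MVW fun a b W hW => tsub_le_iff_right.mpr ?_
    have hxW := hleast ⟨_, fun e _ => Nat.le_add_right 1 _, hW.isProperLabelling, rfl⟩
    exact_mod_cast hxW.trans (sup_vertexSum_one_add_count_le W)
  · set Δ := G.maxDegree
    have hdeg : ∀ ⦃u v⦄, G.Adj u v → G.degree u < 2 * Δ := fun u v huv => by
      have := (G.degree_pos_iff_exists_adj u).mpr ⟨v, huv⟩
      have := G.degree_le_maxDegree u
      omega
    obtain ⟨a⟩ := hconn.nonempty
    have hk : ∀ e ∈ G.edgeSet, Δ * ℓ e ≠ 0 := fun e he => by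
      induction e using Sym2.ind with
      | _ u v =>
        exact Nat.mul_ne_zero (by have := hdeg he; omega) (Nat.one_le_iff_ne_zero.mp (hℓpos _ he))
    obtain ⟨W, hW⟩ := hconn.exists_walk_count_edges_eq_two_mul a (fun e => Δ * ℓ e) hk
    simp_rw [← mul_assoc] at hW
    have hsup : (univ.sup fun u => W.inc u) ≤ 2 * Δ * x := Finset.sup_le fun u _ => by
      rw [W.inc_eq_mul_vertexSum hW, ← hℓx]
      exact Nat.mul_le_mul_left _ (Finset.le_sup (mem_univ u))
    calc MVW G + Δ ≤ ((2 * Δ * x : ℕ) : ℕ∞) + Δ := by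
          gcongr
          exact (MVW_le W (hℓ.irregularising hdeg hW)).trans (by exact_mod_cast hsup)
      _ ≤ 3 * Δ * (1 + x) := by norm_cast; nlinarith

/-- If `G` is a nice graph with maximum degree `Δ` and `x` is the minimum
over proper labellings `ℓ` of `G` of `max_u σ_ℓ(u)`, then `x ≤ MV^W(G) + Δ` and
`MV^W(G) + Δ ≤ 3Δ(1 + x)`. -/
theorem stmt_8 {V : Type*} [Fintype V] [DecidableEq V] (G : SimpleGraph V)
    [DecidableRel G.Adj] (hconn : G.Connected)
    (hK2 : ¬ Nonempty (G ≃g (⊤ : SimpleGraph (Fin 2))))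
    (x : ℕ)
    (hx : IsLeast {s : ℕ | ∃ ℓ : Sym2 V → ℕ, (∀ e ∈ G.edgeSet, 1 ≤ ℓ e) ∧
      IsProperLabelling G ℓ ∧ (Finset.univ.sup fun u => vertexSum G ℓ u) = s} x) :
    (x : ℕ∞) ≤ MVW G + (G.maxDegree : ℕ∞) ∧
      MVW G + (G.maxDegree : ℕ∞) ≤ 3 * (G.maxDegree : ℕ∞) * (1 + (x : ℕ∞)) :=
  stmt_8_general G hconn x hx
end

section
/- Let G be a connected finite simple graph not isomorphic to K₂, with n vertices, maximum degree Δ, and chromatic number k, and let W₀ be a closed walk of G of length p that visits every vertex of G. Then G admits an irregularising walk of length at most p + (n − 1)(2k − 2) + 2Δ; that is, ML^W(G) ≤ p + (n−1)(2k−2) + 2Δ. -/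
open SimpleGraph Finset

variable {V : Type*}

/-!
Rotate `W₀` to start at a vertex `s` of degree at least two (one exists unless `G` is edgeless
or `K₂`) and fix a proper colouring `C` with `k` colours. Going through the vertices `u ≠ s`
from the farthest from `s` to the nearest, insert fewer than `k` round trips from `u` to a
neighbour closer to `s` so that `(d(u) + inc(u)) / 2 ≡ C(u) [MOD k]`; later round trips never
touch `u` again, so at a cost of at most `(n - 1)(2k - 2)` adjacent vertices away from `s` get
distinct degrees. Finally a tail from `s` that goes back and forth along an edge near `s`, whose
length avoids the fewer than `2Δ` values creating a conflict, repairs the edges around `s`.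
-/

namespace SimpleGraph.Walk

variable [DecidableEq V] {G : SimpleGraph V} {a b c u v : V}

@[simp] lemma inc_nil (z : V) : (nil : G.Walk a a).inc z = 0 := rfl

lemma inc_cons (h : G.Adj a b) (W : G.Walk b c) (z : V) :
    (cons h W).inc z = (if z = a ∨ z = b then 1 else 0) + W.inc z := by
  simp only [inc, edges_cons, List.filter_cons, Sym2.mem_iff, decide_eq_true_eq]
  split <;> simp [Nat.add_comm]

lemma inc_append (W₁ : G.Walk a b) (W₂ : G.Walk b c) (z : V) :
    (W₁.append W₂).inc z = W₁.inc z + W₂.inc z := by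
  simp [inc, edges_append, List.filter_append]

lemma exists_alternating (h : G.Adj a b) (ℓ : ℕ) :
    ∃ (e : V) (T : G.Walk a e), T.length = ℓ ∧
      ∀ z, T.inc z = if z = a ∨ z = b then ℓ else 0 := by
  induction ℓ generalizing a b with
  | zero => exact ⟨a, nil, rfl, fun z => by simp [inc]⟩
  | succ ℓ ih =>
    obtain ⟨e, T, hlen, hinc⟩ := ih h.symm
    refine ⟨e, cons h T, by simp [hlen], fun z => ?_⟩
    rw [inc_cons, hinc]
    grind

lemma exists_closed_alternating (h : G.Adj u v) (β : ℕ) :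
    ∃ T : G.Walk u u, T.length = 2 * β ∧
      ∀ z, T.inc z = if z = u ∨ z = v then 2 * β else 0 := by
  induction β with
  | zero => exact ⟨nil, rfl, fun z => by simp [inc]⟩
  | succ β ih =>
    obtain ⟨T, hlen, hinc⟩ := ih
    refine ⟨cons h (cons h.symm T), by simp [hlen]; ring, fun z => ?_⟩
    rw [inc_cons, inc_cons, hinc]
    grind

lemma exists_insert (W : G.Walk a b) (hu : u ∈ W.support) (C : G.Walk u u) :
    ∃ W' : G.Walk a b, W'.length = W.length + C.length ∧
      (∀ z ∈ W.support, z ∈ W'.support) ∧ ∀ z, W'.inc z = W.inc z + C.inc z := by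
  have hW := W.take_spec hu
  refine ⟨(W.takeUntil u hu).append (C.append (W.dropUntil u hu)), ?_, fun z hz => ?_,
    fun z => ?_⟩
  · have := congrArg length hW
    simp only [length_append] at this ⊢
    omega
  · rw [← hW, mem_support_append_iff] at hz
    rw [mem_support_append_iff, mem_support_append_iff]
    rcases hz with hz | hz
    · exact .inl hz
    · exact .inr (.inr hz)
  · have := congrArg (inc · z) hW
    simp only [inc_append] at this ⊢
    omega

end SimpleGraph.Walk

section

variable [Fintype V] [DecidableEq V] {G : SimpleGraph V} [DecidableRel G.Adj]

open Walk

lemma exists_add_on_edge_proper {a b : V} (hab : G.Adj a b) (f : V → ℕ) (hne : f a ≠ f b)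
    (hf : ∀ ⦃u w⦄, G.Adj u w → u ≠ a → u ≠ b → w ≠ a → w ≠ b → f u ≠ f w) :
    ∃ ℓ ≤ G.degree a + G.degree b - 2, ∀ ⦃u w⦄, G.Adj u w →
      f u + (if u = a ∨ u = b then ℓ else 0) ≠ f w + (if w = a ∨ w = b then ℓ else 0) := by
  set F : Finset ℕ := ((G.neighborFinset a).erase b).image (fun w => f w - f a) ∪
    ((G.neighborFinset b).erase a).image (fun w => f w - f b)
  have hF : #F < #(range (G.degree a + G.degree b - 1)) := by
    have ha := G.degree_pos_iff_exists_adj a |>.mpr ⟨b, hab⟩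
    have hb := G.degree_pos_iff_exists_adj b |>.mpr ⟨a, hab.symm⟩
    calc #F ≤ #((G.neighborFinset a).erase b) + #((G.neighborFinset b).erase a) :=
          (card_union_le _ _).trans (add_le_add card_image_le card_image_le)
      _ = G.degree a - 1 + (G.degree b - 1) := by
          rw [card_erase_of_mem (by simpa), card_erase_of_mem (by simpa using hab.symm),
            card_neighborFinset_eq_degree, card_neighborFinset_eq_degree]
      _ < _ := by rw [card_range]; omega
  obtain ⟨ℓ, hℓ, hℓF⟩ := exists_mem_notMem_of_card_lt_card hF
  rw [mem_range] at hℓ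
  refine ⟨ℓ, by omega, ?_⟩
  have key : ∀ ⦃u w⦄, G.Adj u w → (u = a ∨ u = b) → ¬(w = a ∨ w = b) → f u + ℓ ≠ f w := by
    rintro u w huw (rfl | rfl) hw heq <;> apply hℓF
    · exact mem_union_left _ (mem_image.mpr ⟨w, by simp_all, by omega⟩)
    · exact mem_union_right _ (mem_image.mpr ⟨w, by simp_all, by omega⟩)
  intro u w huw
  by_cases hu : u = a ∨ u = b <;> by_cases hw : w = a ∨ w = b <;>
    simp only [hu, hw, if_true, if_false, add_zero]
  · rcases hu with rfl | rfl <;> rcases hw with rfl | rfl <;>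
      first | exact (huw.ne rfl).elim | omega
  · exact key huw hu hw
  · exact (key huw.symm hw hu).symm
  · exact hf huw (by tauto) (by tauto) (by tauto) (by tauto)

lemma exists_walk_proper_of_prefix {r a b : V} (P : G.Walk r a) (hab : G.Adj a b) (f : V → ℕ)
    (hne : f a + P.inc a ≠ f b + P.inc b)
    (hf : ∀ ⦃u w⦄, G.Adj u w → u ≠ a → u ≠ b → w ≠ a → w ≠ b →
      f u + P.inc u ≠ f w + P.inc w) :
    ∃ (e : V) (T : G.Walk r e), T.length ≤ P.length + (G.degree a + G.degree b - 2) ∧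
      ∀ ⦃u w⦄, G.Adj u w → f u + T.inc u ≠ f w + T.inc w := by
  obtain ⟨ℓ, hℓ, hproper⟩ := exists_add_on_edge_proper hab (fun z => f z + P.inc z) hne hf
  obtain ⟨e, A, hA, hAinc⟩ := exists_alternating hab ℓ
  refine ⟨e, P.append A, by rw [length_append, hA]; omega, fun u w huw => ?_⟩
  simpa only [inc_append, hAinc, ← add_assoc] using hproper huw

lemma exists_walk_proper_of_proper_off {r : V} (hr : 2 ≤ G.degree r) (f : V → ℕ)
    (hf : ∀ ⦃u w⦄, G.Adj u w → u ≠ r → w ≠ r → f u ≠ f w) :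
    ∃ (e : V) (T : G.Walk r e), T.length ≤ 2 * G.maxDegree ∧
      ∀ ⦃u w⦄, G.Adj u w → f u + T.inc u ≠ f w + T.inc w := by
  have hΔ := G.degree_le_maxDegree
  obtain ⟨v₁, h₁, v₂, h₂, h₁₂⟩ :=
    one_lt_card.mp (hr.trans_eq (card_neighborFinset_eq_degree ..).symm)
  rw [mem_neighborFinset] at h₁ h₂
  by_cases hv : ∃ v, G.Adj r v ∧ f r ≠ f v
  · obtain ⟨v, hrv, hne⟩ := hv
    obtain ⟨e, T, hT, hT'⟩ := exists_walk_proper_of_prefix nil hrv f (by simpa using hne)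
      (fun u w huw hu _ hw _ => by simpa using hf huw hu hw)
    exact ⟨e, T, by grind, hT'⟩
  push Not at hv
  by_cases hx : ∃ x, G.Adj v₁ x ∧ x ≠ r ∧ f x ≠ f r + 1
  · -- the prefix `r → v₁` lifts `r` above its neighbours
    obtain ⟨x, hx, hxr, hne⟩ := hx
    have hP : ∀ z, (cons h₁ nil).inc z = if z = r ∨ z = v₁ then 1 else 0 := by
      simp [inc_cons]
    obtain ⟨e, T, hT, hT'⟩ := exists_walk_proper_of_prefix (cons h₁ nil) hx f
      (by grind) (fun u w huw hu _ hw _ => by grind [SimpleGraph.irrefl, SimpleGraph.adj_comm])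
    exact ⟨e, T, by grind [length_cons, length_nil], hT'⟩
  · -- the prefix `r → v₁ → r` lifts `v₁` above its neighbours other than `r`
    push Not at hx
    have hP : ∀ z, (cons h₁ (cons h₁.symm nil)).inc z = if z = r ∨ z = v₁ then 2 else 0 := by
      simp only [inc_cons, inc_nil]; grind
    obtain ⟨e, T, hT, hT'⟩ := exists_walk_proper_of_prefix (cons h₁ (cons h₁.symm nil)) h₂ f
      (by grind [SimpleGraph.irrefl])
      (fun u w huw hu _ hw _ => by grind [SimpleGraph.irrefl, SimpleGraph.adj_comm])
    exact ⟨e, T, by grind [length_cons, length_nil], hT'⟩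

end

lemma exists_lt_add_modEq {n : ℕ} (hn : n ≠ 0) (a b : ℕ) : ∃ x < n, a + x ≡ b [MOD n] := by
  have : NeZero n := ⟨hn⟩
  refine ⟨((b : ZMod n) - a).val, ZMod.val_lt _, ?_⟩
  rw [← ZMod.natCast_eq_natCast_iff]
  push_cast
  rw [ZMod.natCast_zmod_val]
  ring

lemma SimpleGraph.Connected.exists_adj_dist_lt {G : SimpleGraph V} (hconn : G.Connected)
    {u r : V} (hu : u ≠ r) :
    ∃ v, G.Adj u v ∧ G.dist v r < G.dist u r := by
  obtain ⟨W, hW⟩ := hconn.exists_walk_length_eq_dist u r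
  cases W with
  | nil => exact absurd rfl hu
  | cons h W' => exact ⟨_, h, (dist_le W').trans_lt (by simp [← hW])⟩

section

variable [DecidableEq V] {G : SimpleGraph V}

open Walk

lemma exists_walk_half_inc_modEq {a b : V} (W : G.Walk a b) {k : ℕ} (hk : k ≠ 0)
    (f c ρ : V → ℕ) (S : Finset V) (hSW : ∀ u ∈ S, u ∈ W.support)
    (hS : ∀ u ∈ S, ∃ v, G.Adj u v ∧ ρ v < ρ u) :
    ∃ W' : G.Walk a b, W'.length ≤ W.length + #S * (2 * k - 2) ∧
      (∀ z ∈ W.support, z ∈ W'.support) ∧ ∀ u ∈ S, (f u + W'.inc u) / 2 ≡ c u [MOD k] := by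
  induction S using Finset.induction_on_min_value ρ with
  | empty => exact ⟨W, by simp, fun z hz => hz, by simp⟩
  | insert u S hu hmin ih =>
    obtain ⟨W₁, hlen₁, hsupp₁, hmod₁⟩ := ih (fun z hz => hSW z (mem_insert_of_mem hz))
      (fun z hz => hS z (mem_insert_of_mem hz))
    obtain ⟨v, huv, hρ⟩ := hS u (mem_insert_self u S)
    have hvS : v ∉ S := fun hv => (hmin v hv).not_gt hρ
    -- `β` round trips along `uv` shift `(f u + inc u) / 2` by `β` and leave `S` untouched
    obtain ⟨β, hβ, hβmod⟩ := exists_lt_add_modEq hk ((f u + W₁.inc u) / 2) (c u)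
    obtain ⟨B, hBlen, hBinc⟩ := exists_closed_alternating huv β
    obtain ⟨W₂, hlen₂, hsupp₂, hinc₂⟩ :=
      exists_insert W₁ (hsupp₁ u (hSW u (mem_insert_self u S))) B
    refine ⟨W₂, ?_, fun z hz => hsupp₂ z (hsupp₁ z hz), fun z hz => ?_⟩
    · rw [card_insert_of_notMem hu, hlen₂, hBlen, add_mul]
      omega
    · rw [hinc₂, hBinc]
      rcases mem_insert.mp hz with rfl | hz
      · rwa [if_pos (.inl rfl), ← Nat.add_assoc, Nat.add_mul_div_left _ _ two_pos]
      · rw [if_neg (by rintro (rfl | rfl) <;> contradiction), add_zero]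
        exact hmod₁ z hz

end

section

variable [Fintype V] {G : SimpleGraph V} [DecidableRel G.Adj]

lemma card_le_two_of_degree_le_one (hconn : G.Connected) (hdeg : ∀ v, G.degree v ≤ 1) :
    Fintype.card V ≤ 2 := by
  have hE := hconn.card_vert_le_card_edgeSet_add_one
  rw [Nat.card_eq_fintype_card, Nat.card_eq_fintype_card, ← edgeFinset_card] at hE
  have hsum : 2 * #G.edgeFinset ≤ Fintype.card V := by
    rw [← sum_degrees_eq_twice_card_edges, ← card_univ]
    simpa using sum_le_card_nsmul univ (fun v => G.degree v) 1 (fun v _ => hdeg v)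
  omega

lemma nonempty_iso_top_fin_two (hconn : G.Connected) (hdeg : ∀ v, G.degree v ≤ 1)
    {u v : V} (huv : G.Adj u v) : Nonempty (G ≃g (⊤ : SimpleGraph (Fin 2))) := by
  classical
  have hcard : Fintype.card V = 2 :=
    (card_le_two_of_degree_le_one hconn hdeg).antisymm
      ((card_pair huv.ne).symm.trans_le (card_le_univ _))
  have huniv : ∀ x, x = u ∨ x = v := by
    by_contra! ⟨x, hxu, hxv⟩
    have := (card_eq_three.mpr ⟨u, v, x, huv.ne, Ne.symm hxu, Ne.symm hxv, rfl⟩).symm.trans_le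
      (card_le_univ _)
    omega
  have hG : G = ⊤ := by
    ext x y
    rw [top_adj]
    refine ⟨Adj.ne, fun hxy => ?_⟩
    rcases huniv x with rfl | rfl <;> rcases huniv y with rfl | rfl <;>
      first | exact (hxy rfl).elim | exact huv | exact huv.symm
  subst hG
  exact ⟨Iso.completeGraph (Fintype.equivFinOfCardEq hcard)⟩

end

lemma MLW_le [Fintype V] [DecidableEq V] {G : SimpleGraph V} [DecidableRel G.Adj] {a b : V}
    {W : G.Walk a b} (hW : W.Irregularising) : MLW G ≤ W.length :=
  iInf_le_of_le a <| iInf_le_of_le b <| iInf_le_of_le W <| iInf_le _ hW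

/-- If `G` is a connected graph, not isomorphic to `K₂`, with `n` vertices,
maximum degree `Δ` and chromatic number `k`, and `W₀` is a closed walk of length `p`
visiting every vertex, then `G` admits an irregularising walk of length at most
`p + (n-1)(2k-2) + 2Δ`. -/
theorem stmt_10 {V : Type*} [Fintype V] [DecidableEq V] (G : SimpleGraph V)
    [DecidableRel G.Adj] (hconn : G.Connected)
    (hK2 : ¬ Nonempty (G ≃g (⊤ : SimpleGraph (Fin 2))))
    (k : ℕ) (hk : G.chromaticNumber = (k : ℕ∞))
    {r : V} (W₀ : G.Walk r r) (hvis : ∀ v : V, v ∈ W₀.support) :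
    (∃ (a b : V) (W : G.Walk a b), W.Irregularising ∧
        W.length ≤ W₀.length + (Fintype.card V - 1) * (2 * k - 2) + 2 * G.maxDegree) ∧
      MLW G ≤ (W₀.length + (Fintype.card V - 1) * (2 * k - 2) + 2 * G.maxDegree : ℕ) := by
  suffices h : ∃ (a b : V) (W : G.Walk a b), W.Irregularising ∧
      W.length ≤ W₀.length + (Fintype.card V - 1) * (2 * k - 2) + 2 * G.maxDegree by
    obtain ⟨a, b, W, hW, hlen⟩ := h
    exact ⟨⟨a, b, W, hW, hlen⟩, (MLW_le hW).trans (by exact_mod_cast hlen)⟩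
  by_cases hdeg : ∃ s, 2 ≤ G.degree s
  swap
  · push Not at hdeg
    exact ⟨r, r, .nil, fun u v huv =>
      (hK2 (nonempty_iso_top_fin_two hconn (fun v => Nat.le_of_lt_succ (hdeg v)) huv)).elim,
      Nat.zero_le _⟩
  obtain ⟨s, hs⟩ := hdeg
  obtain ⟨C⟩ := chromaticNumber_le_iff_colorable.mp hk.le
  obtain ⟨W, hWlen, -, hWmod⟩ := exists_walk_half_inc_modEq (W₀.rotate s (hvis s))
    (Fin.pos (C s)).ne' (fun u => G.degree u) (fun u => C u) (G.dist · s) (univ.erase s)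
    (fun u _ => by simp [hvis]) (fun u hu => hconn.exists_adj_dist_lt (ne_of_mem_erase hu))
  have hproper : ∀ ⦃u w⦄, G.Adj u w → u ≠ s → w ≠ s →
      G.degree u + W.inc u ≠ G.degree w + W.inc w := by
    intro u w huw hu hw heq
    have hmod := (hWmod u (mem_erase.mpr ⟨hu, mem_univ u⟩)).symm.trans
      (heq ▸ hWmod w (mem_erase.mpr ⟨hw, mem_univ w⟩))
    exact C.valid huw (Fin.ext (hmod.eq_of_lt_of_lt (C u).isLt (C w).isLt))
  obtain ⟨e, T, hTlen, hT⟩ := exists_walk_proper_of_proper_off hs _ hproper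
  refine ⟨s, e, W.append T, fun u w huw => by simpa [Walk.inc_append, add_assoc] using hT huw,
    ?_⟩
  rw [card_erase_of_mem (mem_univ s), card_univ, Walk.length_rotate] at hWlen
  rw [Walk.length_append]
  omega
end
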